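/- arXiv:1709.01177 — 6 statements merged into one kernel-verified Lean document; each statement's English description precedes it below -/
import Mathlib

section
/- Any minimal subset B ⊆ V \ {X} such that Y is conditionally dependent on X given B (where X is a relevant variable) contains only relevant variables; that is, every variable X' ∈ B is relevant (there exists some set B' ⊆ V with Y not independent of X' given B'). -/
/-!
If `X'` were irrelevant, then `Y ⫫ X' | (B \ {X'}) ∪ {X}`; together with `Y ⫫ X | B \ {X'}`
(minimality of `B`), contraction and weak union give `Y ⫫ X | B`, a contradiction.
-/

section SemiGraphoid

variable {α : Type*} [DecidableEq α] (CI : Finset α → Finset α → Finset α → Prop)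

theorem ci_union_of_ci_of_ci_union
    (weakUnion : ∀ S T U R, CI S (T ∪ U) R → CI S T (R ∪ U))
    (contraction : ∀ S T U R, CI S T R → CI S U (R ∪ T) → CI S (T ∪ U) R)
    {S T U R : Finset α} (hT : CI S T R) (hU : CI S U (R ∪ T)) : CI S T (R ∪ U) :=
  weakUnion _ _ _ _ (contraction _ _ _ _ hT hU)

end SemiGraphoid

theorem minimal_conditioning_contains_only_relevant_general
    {ι : Type*} [Fintype ι] [DecidableEq ι]
    (CI : Finset ι → Finset ι → Finset ι → Prop)
    (weakUnion : ∀ S T U R, CI S (T ∪ U) R → CI S T (R ∪ U))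
    (contraction : ∀ S T U R, CI S T R → CI S U (R ∪ T) → CI S (T ∪ U) R)
    (y X : ι) (hXy : X ≠ y)
    (B : Finset ι) (hB : B ⊆ (Finset.univ.erase y).erase X)
    (hdep : ¬ CI {y} {X} B)
    (hmin : ∀ B' ⊂ B, CI {y} {X} B') :
    ∀ X' ∈ B, ∃ B' ⊆ (Finset.univ.erase y).erase X', ¬ CI {y} {X'} B' := by
  intro X' hX'
  have hX'X : X' ≠ X := (Finset.mem_erase.mp (hB hX')).1
  refine ⟨B.erase X' ∪ {X}, ?_, fun hindep => hdep ?_⟩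
  · exact Finset.union_subset (Finset.erase_subset_erase _ (hB.trans (Finset.erase_subset _ _)))
      (by simp [hX'X.symm, hXy])
  · have hrest : CI {y} {X} (B.erase X') := hmin _ (Finset.erase_ssubset hX')
    simpa [Finset.insert_erase hX'] using
      ci_union_of_ci_of_ci_union CI weakUnion contraction hrest hindep

/-- Any minimal subset `B ⊆ V \ {X}` such that `Y ⫫̸ X | B` (for a relevant
variable `X`) contains only relevant variables.  Here the variables together with the
output `y` are indexed by a finite type `ι`, `V = univ \ {y}`, and `CI S T R` abstractly
denotes the conditional-independence statement `S ⫫ T | R`, assumed to satisfy the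
semi-graphoid axioms (symmetry, decomposition, weak union, contraction). -/
theorem minimal_conditioning_contains_only_relevant
    {ι : Type*} [Fintype ι] [DecidableEq ι]
    (CI : Finset ι → Finset ι → Finset ι → Prop)
    (symm : ∀ S T R, CI S T R → CI T S R)
    (decomp : ∀ S T U R, CI S (T ∪ U) R → CI S T R)
    (weakUnion : ∀ S T U R, CI S (T ∪ U) R → CI S T (R ∪ U))
    (contraction : ∀ S T U R, CI S T R → CI S U (R ∪ T) → CI S (T ∪ U) R)
    (y X : ι) (hXy : X ≠ y)
    (B : Finset ι) (hB : B ⊆ (Finset.univ.erase y).erase X)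
    (hdep : ¬ CI {y} {X} B)
    (hmin : ∀ B' ⊂ B, CI {y} {X} B') :
    ∀ X' ∈ B, ∃ B' ⊆ (Finset.univ.erase y).erase X', ¬ CI {y} {X'} B' :=
  minimal_conditioning_contains_only_relevant_general CI weakUnion contraction y X hXy B hB hdep
    hmin
end

section
/- If the joint distribution over V ∪ {Y} is strictly positive and satisfies the composition property, and B is a minimal subset such that Y ⫫̸ X | B for a relevant variable X, then every X' ∈ B satisfies deg(X') < |B| (strict inequality). -/
/-! Let `X' ∈ B` and `B' = B \ {X'}`. By minimality `Y ⫫ X | B'`; if also `Y ⫫ X' | B'`, then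
composition gives `Y ⫫ {X, X'} | B'` and weak union `Y ⫫ X | B' ∪ {X'} = B`, a contradiction.
So `B'` witnesses `deg X' ≤ |B| - 1`. -/

theorem Finset.erase_union_singleton {α : Type*} [DecidableEq α] {s : Finset α} {a : α}
    (ha : a ∈ s) : s.erase a ∪ {a} = s := by
  rw [Finset.union_comm, ← Finset.insert_eq, Finset.insert_erase ha]

theorem not_ci_erase_of_ci_erase {ι : Type*} [DecidableEq ι]
    {CI : Finset ι → Finset ι → Finset ι → Prop}
    (weakUnion : ∀ S T U R, CI S (T ∪ U) R → CI S T (R ∪ U))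
    (composition : ∀ S T U R, CI S T R → CI S U R → CI S (T ∪ U) R)
    {S T B : Finset ι} {x : ι} (hx : x ∈ B)
    (hdep : ¬ CI S T B) (hindep : CI S T (B.erase x)) :
    ¬ CI S {x} (B.erase x) := fun hx_indep => by
  have := weakUnion _ _ _ _ (composition _ _ _ _ hindep hx_indep)
  rw [Finset.erase_union_singleton hx] at this
  exact hdep this

theorem minimal_conditioning_degree_lt_card_of_PC_general
    {ι : Type*} [Fintype ι] [DecidableEq ι]
    (CI : Finset ι → Finset ι → Finset ι → Prop)
    (weakUnion : ∀ S T U R, CI S (T ∪ U) R → CI S T (R ∪ U))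
    (composition : ∀ S T U R, CI S T R → CI S U R → CI S (T ∪ U) R)
    (y X : ι)
    (B : Finset ι) (hB : B ⊆ (Finset.univ.erase y).erase X)
    (hdep : ¬ CI {y} {X} B)
    (hmin : ∀ B' ⊂ B, CI {y} {X} B') :
    ∀ X' ∈ B, ∃ B' ⊆ (Finset.univ.erase y).erase X',
      B'.card < B.card ∧ ¬ CI {y} {X'} B' := by
  intro X' hX'
  refine ⟨B.erase X', ?_, Finset.card_erase_lt_of_mem hX', ?_⟩
  · exact Finset.erase_subset_erase X' (hB.trans (Finset.erase_subset X _))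
  · exact not_ci_erase_of_ci_erase weakUnion composition hX' hdep
      (hmin _ (Finset.erase_ssubset hX'))

/-- For a strictly positive distribution satisfying the composition property
(strict positivity being used through the intersection axiom, which every strictly
positive distribution satisfies), if `B` is a minimal subset with `Y ⫫̸ X | B` for a
relevant variable `X`, then every `X' ∈ B` has degree strictly less than `|B|`:
there exists `B' ⊆ V \ {X'}` with `|B'| < |B|` and `Y ⫫̸ X' | B'`. -/
theorem minimal_conditioning_degree_lt_card_of_PC
    {ι : Type*} [Fintype ι] [DecidableEq ι]
    (CI : Finset ι → Finset ι → Finset ι → Prop)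
    (symm : ∀ S T R, CI S T R → CI T S R)
    (decomp : ∀ S T U R, CI S (T ∪ U) R → CI S T R)
    (weakUnion : ∀ S T U R, CI S (T ∪ U) R → CI S T (R ∪ U))
    (contraction : ∀ S T U R, CI S T R → CI S U (R ∪ T) → CI S (T ∪ U) R)
    (composition : ∀ S T U R, CI S T R → CI S U R → CI S (T ∪ U) R)
    (intersection : ∀ S T U R, CI S T (R ∪ U) → CI S U (R ∪ T) → CI S (T ∪ U) R)
    (y X : ι) (hXy : X ≠ y)
    (B : Finset ι) (hB : B ⊆ (Finset.univ.erase y).erase X)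
    (hdep : ¬ CI {y} {X} B)
    (hmin : ∀ B' ⊂ B, CI {y} {X} B') :
    ∀ X' ∈ B, ∃ B' ⊆ (Finset.univ.erase y).erase X',
      B'.card < B.card ∧ ¬ CI {y} {X'} B' :=
  minimal_conditioning_degree_lt_card_of_PC_general CI weakUnion composition y X B hB hdep hmin
end

section
/- For a strictly positive distribution satisfying the composition property, if B = {X_1, ..., X_k} is a nonempty minimal subset of V \ {X} with Y ⫫̸ X | B for a relevant variable X, then the elements of B can be ordered into a sequence X'_1, ..., X'_k such that deg(X'_i) < i for every i = 1, ..., k. -/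
/-!
If `B` is a minimal conditioning set making `X` dependent on `y`, then for every proper subset
`C ⊂ B` some variable of `B \ C` is already dependent on `y` given `C`: otherwise composition
would make `X` and all of `B \ C` jointly independent of `y` given `C`, and weak union would give
`y ⫫ X | B`. Picking such variables greedily, starting from `C = ∅`, enumerates `B` so that each
variable is dependent on `y` given the set of its predecessors, whose size is its index.
-/

theorem List.Nodup.getElem_notMem_take {α : Type*} {l : List α} (hl : l.Nodup) {j : ℕ}
    (hj : j < l.length) : l[j] ∉ l.take j := by
  intro hmem
  obtain ⟨i, hi, hget⟩ := List.getElem_of_mem hmem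
  rw [List.getElem_take, hl.getElem_inj_iff] at hget
  rw [List.length_take, lt_inf_iff] at hi
  omega

theorem Finset.exists_enumeration_of_forall_ssubset {α : Type*} [DecidableEq α] (B : Finset α)
    (P : Finset α → α → Prop) (hP : ∀ C ⊂ B, ∃ z ∈ B \ C, P C z) :
    ∃ l : List α, l.Nodup ∧ l.toFinset = B ∧
      ∀ (j : ℕ) (hj : j < l.length), P (l.take j).toFinset l[j] := by
  have grow : ∀ n ≤ B.card, ∃ l : List α, l.Nodup ∧ l.toFinset ⊆ B ∧ l.length = n ∧
      ∀ (j : ℕ) (hj : j < l.length), P (l.take j).toFinset l[j] := by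
    intro n
    induction n with
    | zero => exact fun _ => ⟨[], by simp⟩
    | succ n ih =>
      intro hn
      obtain ⟨l, hnd, hlB, hlen, hchain⟩ := ih (by omega)
      have hlB' : l.toFinset ⊂ B := hlB.ssubset_of_ne fun h => by
        have := List.toFinset_card_of_nodup hnd
        rw [h] at this
        omega
      obtain ⟨z, hz, hPz⟩ := hP _ hlB'
      rw [Finset.mem_sdiff, List.mem_toFinset] at hz
      refine ⟨l ++ [z], hnd.append (List.nodup_singleton z) (by simpa using hz.2), ?_, by simpa, ?_⟩
      · simpa [Finset.insert_subset_iff] using ⟨hz.1, hlB⟩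
      · intro j hj
        rcases Nat.lt_or_ge j l.length with hjl | hjl
        · rw [List.take_append_of_le_length hjl.le, List.getElem_append_left hjl]
          exact hchain j hjl
        · have hjl : j = l.length := by
            rw [List.length_append, List.length_singleton] at hj
            omega
          subst hjl
          simpa [List.take_left'] using hPz
  obtain ⟨l, hnd, hlB, hlen, hchain⟩ := grow B.card le_rfl
  refine ⟨l, hnd, Finset.eq_of_subset_of_card_le hlB ?_, hchain⟩
  rw [List.toFinset_card_of_nodup hnd, hlen]

section ConditionalIndependence

variable {ι : Type*} [DecidableEq ι] (CI : Finset ι → Finset ι → Finset ι → Prop)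

theorem ci_of_forall_singleton
    (composition : ∀ S T U R, CI S T R → CI S U R → CI S (T ∪ U) R)
    {S T R : Finset ι} (hT : T.Nonempty) (h : ∀ z ∈ T, CI S {z} R) : CI S T R := by
  induction hT using Finset.Nonempty.cons_induction with
  | singleton a => exact h a (Finset.mem_singleton_self a)
  | cons a T _ _ ih =>
    rw [Finset.cons_eq_insert, Finset.insert_eq]
    rw [Finset.forall_mem_cons] at h
    exact composition _ _ _ _ h.1 (ih h.2)

theorem exists_not_ci_sdiff_of_minimal
    (weakUnion : ∀ S T U R, CI S (T ∪ U) R → CI S T (R ∪ U))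
    (composition : ∀ S T U R, CI S T R → CI S U R → CI S (T ∪ U) R)
    {S B : Finset ι} {X : ι} (hdep : ¬ CI S {X} B) (hmin : ∀ B' ⊂ B, CI S {X} B')
    {C : Finset ι} (hC : C ⊂ B) : ∃ z ∈ B \ C, ¬ CI S {z} C := by
  by_contra! hindep
  have hrest : CI S (B \ C) C :=
    ci_of_forall_singleton CI composition (Finset.sdiff_nonempty.2 hC.not_subset) hindep
  have hX := weakUnion _ _ _ _ (composition _ _ _ _ (hmin C hC) hrest)
  rw [Finset.union_sdiff_of_subset hC.subset] at hX
  exact hdep hX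

end ConditionalIndependence

theorem minimal_conditioning_chain_of_PC_general
    {ι : Type*} [Fintype ι] [DecidableEq ι]
    (CI : Finset ι → Finset ι → Finset ι → Prop)
    (weakUnion : ∀ S T U R, CI S (T ∪ U) R → CI S T (R ∪ U))
    (composition : ∀ S T U R, CI S T R → CI S U R → CI S (T ∪ U) R)
    (y X : ι)
    (B : Finset ι) (hB : B ⊆ (Finset.univ.erase y).erase X)
    (hdep : ¬ CI {y} {X} B)
    (hmin : ∀ B' ⊂ B, CI {y} {X} B') :
    ∃ l : List ι, l.Nodup ∧ l.toFinset = B ∧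
      ∀ (j : ℕ) (hj : j < l.length),
        ∃ B' ⊆ (Finset.univ.erase y).erase (l.get ⟨j, hj⟩),
          B'.card ≤ j ∧ ¬ CI {y} {l.get ⟨j, hj⟩} B' := by
  obtain ⟨l, hnd, hlB, hchain⟩ := Finset.exists_enumeration_of_forall_ssubset B
    (fun C z => ¬ CI {y} {z} C)
    (fun _ hC => exists_not_ci_sdiff_of_minimal CI weakUnion composition hdep hmin hC)
  refine ⟨l, hnd, hlB, fun j hj => ⟨(l.take j).toFinset, ?_, ?_, by simpa using hchain j hj⟩⟩
  · intro a ha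
    rw [List.mem_toFinset] at ha
    have haB : a ∈ B := hlB ▸ List.mem_toFinset.2 (List.mem_of_mem_take ha)
    refine Finset.mem_erase.2 ⟨?_, Finset.erase_subset _ _ (hB haB)⟩
    rintro rfl
    exact hnd.getElem_notMem_take hj ha
  · exact (List.toFinset_card_le _).trans (by simp)

/-- For a strictly positive distribution satisfying composition (strict
positivity entering through the intersection axiom), if `B` is a nonempty minimal subset
of `V \ {X}` with `Y ⫫̸ X | B` for a relevant variable `X`, then the elements of `B` can
be ordered into a sequence `X'_1, …, X'_k` (here a nodup list, 0-indexed) such that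
`deg(X'_i) < i` for every `i = 1, …, k`, i.e. the variable at 0-based position `j` admits
a conditioning set of size at most `j` making it dependent on the output `y`. -/
theorem minimal_conditioning_chain_of_PC
    {ι : Type*} [Fintype ι] [DecidableEq ι]
    (CI : Finset ι → Finset ι → Finset ι → Prop)
    (symm : ∀ S T R, CI S T R → CI T S R)
    (decomp : ∀ S T U R, CI S (T ∪ U) R → CI S T R)
    (weakUnion : ∀ S T U R, CI S (T ∪ U) R → CI S T (R ∪ U))
    (contraction : ∀ S T U R, CI S T R → CI S U (R ∪ T) → CI S (T ∪ U) R)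
    (composition : ∀ S T U R, CI S T R → CI S U R → CI S (T ∪ U) R)
    (intersection : ∀ S T U R, CI S T (R ∪ U) → CI S U (R ∪ T) → CI S (T ∪ U) R)
    (y X : ι) (hXy : X ≠ y)
    (B : Finset ι) (hBne : B.Nonempty) (hB : B ⊆ (Finset.univ.erase y).erase X)
    (hdep : ¬ CI {y} {X} B)
    (hmin : ∀ B' ⊂ B, CI {y} {X} B') :
    ∃ l : List ι, l.Nodup ∧ l.toFinset = B ∧
      ∀ (j : ℕ) (hj : j < l.length),
        ∃ B' ⊆ (Finset.univ.erase y).erase (l.get ⟨j, hj⟩),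
          B'.card ≤ j ∧ ¬ CI {y} {l.get ⟨j, hj⟩} B' :=
  minimal_conditioning_chain_of_PC_general CI weakUnion composition y X B hB hdep hmin
end

section
/- If X is a relevant variable with deg(X) < q − 1 (equivalently, there exists B ⊆ V \ {X} with |B| ≤ q − 1 and I(X; Y | B) > 0), then the asymptotic random-subspace importance Imp(X) = Σ_{k=0}^{q−1} (1/C(p,k)) Σ_{B ∈ P_k(V \ {X})} I(X; Y | B) is strictly positive; conversely if deg(X) ≥ q then Imp(X) = 0. In particular, for q = p this importance is positive iff X is relevant. -/
open Finset

/-! Every weight `1 / C(p, k)` with `k < q ≤ p` is positive and every `I(X; Y | B)` is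
nonnegative, so `Imp(X)` is positive exactly when some `I(X; Y | B)` with `|B| < q` is. -/

namespace Finset

variable {α : Type*} {S : Finset α} {q : ℕ} {c : ℕ → ℝ} {f : Finset α → ℝ}

theorem sum_range_mul_sum_powersetCard_eq_zero (h : ∀ B ⊆ S, B.card < q → f B = 0) :
    ∑ k ∈ range q, c k * ∑ B ∈ S.powersetCard k, f B = 0 := by
  refine sum_eq_zero fun k hk => ?_
  rw [sum_eq_zero fun B hB => ?_, mul_zero]
  obtain ⟨hBS, rfl⟩ := mem_powersetCard.1 hB
  exact h B hBS (mem_range.1 hk)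

theorem sum_range_mul_sum_powersetCard_pos_iff (hc : ∀ k < q, 0 < c k) (hf : ∀ B, 0 ≤ f B) :
    0 < ∑ k ∈ range q, c k * ∑ B ∈ S.powersetCard k, f B ↔
      ∃ B ⊆ S, B.card < q ∧ 0 < f B := by
  constructor
  · intro hpos
    by_contra! hle
    exact hpos.ne' (sum_range_mul_sum_powersetCard_eq_zero fun B hBS hk =>
      le_antisymm (hle B hBS hk) (hf B))
  · rintro ⟨B, hBS, hk, hfB⟩
    have hterm_nonneg : ∀ k ∈ range q, 0 ≤ c k * ∑ B ∈ S.powersetCard k, f B :=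
      fun k hk => mul_nonneg (hc k (mem_range.1 hk)).le (sum_nonneg fun B _ => hf B)
    have hlayer_pos : 0 < ∑ B' ∈ S.powersetCard B.card, f B' :=
      hfB.trans_le (single_le_sum (fun B' _ => hf B') (mem_powersetCard.2 ⟨hBS, rfl⟩))
    exact sum_pos' hterm_nonneg ⟨B.card, mem_range.2 hk, mul_pos (hc _ hk) hlayer_pos⟩

end Finset

/-- For the asymptotic random-subspace importance
`Imp(X) = Σ_{k=0}^{q−1} (1/C(p,k)) Σ_{B ∈ P_k(V\{X})} I(X;Y|B)`,
(i) if `X` is relevant with a conditioning set of size at most `q − 1`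
(i.e. `deg(X) ≤ q − 1`), then `Imp(X) > 0`;
(ii) if `deg(X) ≥ q` (no conditioning set of size `< q` gives positive CMI),
then `Imp(X) = 0`;
(iii) for `q = p`, `Imp(X) > 0` iff `X` is relevant.
Here `I X B` abstractly denotes the (nonnegative) conditional mutual information
`I(X;Y|B)`, and the variable set `V` is a finite type `ι` of cardinality `p`. -/
theorem rs_importance_positive_iff_low_degree
    {ι : Type*} [Fintype ι] [DecidableEq ι]
    (p q : ℕ) (hp : Fintype.card ι = p) (hq : 1 ≤ q) (hqp : q ≤ p)
    (I : ι → Finset ι → ℝ) (hI : ∀ X B, 0 ≤ I X B)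
    (X : ι) (Imp : ℝ)
    (hImp : Imp = ∑ k ∈ Finset.range q, (1 / (p.choose k : ℝ)) *
        ∑ B ∈ (Finset.univ.erase X).powersetCard k, I X B) :
    ((∃ B ⊆ Finset.univ.erase X, B.card ≤ q - 1 ∧ 0 < I X B) → 0 < Imp) ∧
    ((∀ B ⊆ Finset.univ.erase X, B.card < q → I X B = 0) → Imp = 0) ∧
    (q = p → (0 < Imp ↔ ∃ B ⊆ Finset.univ.erase X, 0 < I X B)) := by
  have hweight : ∀ k < q, 0 < 1 / (p.choose k : ℝ) := fun k hk => by
    have := Nat.choose_pos (hk.le.trans hqp)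
    positivity
  have hcard : ∀ B ⊆ univ.erase X, B.card < p := fun B hB => by
    simpa [hp] using (card_le_card hB).trans_lt (card_erase_lt_of_mem (mem_univ X))
  subst hImp
  rw [sum_range_mul_sum_powersetCard_pos_iff hweight (hI X)]
  refine ⟨fun ⟨B, hBS, hk, hpos⟩ => ⟨B, hBS, by omega, hpos⟩,
    sum_range_mul_sum_powersetCard_eq_zero, ?_⟩
  rintro rfl
  exact ⟨fun ⟨B, hBS, _, hpos⟩ => ⟨B, hBS, hpos⟩,
    fun ⟨B, hBS, hpos⟩ => ⟨B, hBS, hcard B hBS, hpos⟩⟩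
end

section
/- For a strictly positive distribution, if X is weakly relevant (relevant but Y ⫫ X | V \ {X}) and the distribution satisfies the intersection property, then there exists another variable X' ≠ X such that removing X' restores dependence in some conditioning, i.e., there exists B ⊆ V \ {X, X'} with Y ⫫̸ X | B. Equivalently: a weakly relevant variable has a minimal conditioning set B that is a proper subset of V \ {X}. -/
open Finset

lemma Finset.exists_subset_erase_not_of_subset_not {α : Type*} [DecidableEq α]
    {P : Finset α → Prop} {A B : Finset α} (hBA : B ⊆ A) (hB : ¬ P B) (hA : P A) :
    ∃ x ∈ A, ∃ C ⊆ A.erase x, ¬ P C := by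
  have hBA' : B ⊂ A := hBA.ssubset_of_ne fun h => hB (h ▸ hA)
  obtain ⟨x, hx, hBx⟩ := ssubset_iff_exists_subset_erase.1 hBA'
  exact ⟨x, hx, B, hBx, hB⟩

theorem weakly_relevant_has_proper_minimal_conditioning_general
    {ι : Type*} [Fintype ι] [DecidableEq ι]
    (CI : Finset ι → Finset ι → Finset ι → Prop)
    (y X : ι)
    (hrel : ∃ B ⊆ (Finset.univ.erase y).erase X, ¬ CI {y} {X} B)
    (hnotstrong : CI {y} {X} ((Finset.univ.erase y).erase X)) :
    ∃ X' ∈ Finset.univ.erase y, X' ≠ X ∧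
      ∃ B ⊆ ((Finset.univ.erase y).erase X).erase X', ¬ CI {y} {X} B := by
  obtain ⟨B, hB, hnCI⟩ := hrel
  obtain ⟨X', hX', C, hC, hnC⟩ :=
    exists_subset_erase_not_of_subset_not (P := CI {y} {X}) hB hnCI hnotstrong
  exact ⟨X', mem_of_mem_erase hX', ne_of_mem_erase hX', C, hC, hnC⟩

/-- For a strictly positive distribution (strict positivity entering via
the intersection axiom, valid for such distributions), if `X` is weakly relevant —
relevant but `Y ⫫ X | V \ {X}` — then there exists another variable `X' ≠ X` in `V`
such that some conditioning set avoiding both `X` and `X'` makes `X` dependent on `Y`: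
`∃ B ⊆ V \ {X, X'}` with `Y ⫫̸ X | B`.  Equivalently, a weakly relevant variable has a
minimal conditioning set that is a proper subset of `V \ {X}`.  Here `y` is the output,
`V = univ \ {y}`, and `CI` is an abstract conditional-independence relation satisfying
the semi-graphoid and intersection axioms. -/
theorem weakly_relevant_has_proper_minimal_conditioning
    {ι : Type*} [Fintype ι] [DecidableEq ι]
    (CI : Finset ι → Finset ι → Finset ι → Prop)
    (symm : ∀ S T R, CI S T R → CI T S R)
    (decomp : ∀ S T U R, CI S (T ∪ U) R → CI S T R)
    (weakUnion : ∀ S T U R, CI S (T ∪ U) R → CI S T (R ∪ U))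
    (contraction : ∀ S T U R, CI S T R → CI S U (R ∪ T) → CI S (T ∪ U) R)
    (intersection : ∀ S T U R, CI S T (R ∪ U) → CI S U (R ∪ T) → CI S (T ∪ U) R)
    (y X : ι) (hXy : X ≠ y)
    (hrel : ∃ B ⊆ (Finset.univ.erase y).erase X, ¬ CI {y} {X} B)
    (hnotstrong : CI {y} {X} ((Finset.univ.erase y).erase X)) :
    ∃ X' ∈ Finset.univ.erase y, X' ≠ X ∧
      ∃ B ⊆ ((Finset.univ.erase y).erase X).erase X', ¬ CI {y} {X} B :=
  weakly_relevant_has_proper_minimal_conditioning_general CI y X hrel hnotstrong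
end

section
/- Intersection property for strictly positive discrete distributions: if the joint distribution of disjoint discrete variables S, T, U, R is strictly positive, then S ⫫ T | (R ∪ U) and S ⫫ U | (R ∪ T) together imply S ⫫ (T ∪ U) | R. -/
/-!
Under strict positivity we may divide by marginals. Put `f = P(S,T,U,R)` and `g = P(T,U,R)`.
The hypothesis `S ⫫ T | R ∪ U` says `f / g = P(S,R,U) / P(R,U)`, so `f / g` ignores the
coordinates in `T`; likewise `S ⫫ U | R ∪ T` says it ignores those in `U`. A function ignoring
each of `T` and `U` ignores `T ∪ U` (change the `T`-coordinates first, then the `U`-coordinates),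
so `f = c · g` on every fibre of the `(T ∪ U)`-coordinates, and summing over the fibre through `v`
gives `P(S,R) = c · P(R)` with `c = f(v) / g(v)`, which is the claim.
-/

open Finset

/-- Probability, under the joint pmf `w` of the discrete random variables indexed by `ι`
(with values in the finite type `α`), that the variables in `S` agree with the
assignment `v`. -/
noncomputable def margProb {ι α : Type*} [Fintype ι] [Fintype α]
    [DecidableEq ι] [DecidableEq α]
    (w : (ι → α) → ℝ) (S : Finset ι) (v : ι → α) : ℝ :=
  ∑ u : ι → α, if ∀ i ∈ S, u i = v i then w u else 0

/-- Conditional independence of the joint discrete variables indexed by `A` and `B`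
given those indexed by `R`, under the joint pmf `w`: the standard factorization
`P(A,B,R)·P(R) = P(A,R)·P(B,R)` for all value assignments. -/
def CondIndepSets {ι α : Type*} [Fintype ι] [Fintype α]
    [DecidableEq ι] [DecidableEq α]
    (w : (ι → α) → ℝ) (A B R : Finset ι) : Prop :=
  ∀ v : ι → α,
    margProb w (A ∪ B ∪ R) v * margProb w R v
      = margProb w (A ∪ R) v * margProb w (B ∪ R) v

theorem DependsOn.inter {ι β : Type*} {α : ι → Type*} {f : (Π i, α i) → β} {s t : Set ι}
    (hs : DependsOn f s) (ht : DependsOn f t) : DependsOn f (s ∩ t) := by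
  classical
  intro x y hxy
  calc f x = f (s.piecewise x y) := hs fun i hi ↦ (s.piecewise_eq_of_mem x y hi).symm
    _ = f y := ht fun i hi ↦ by
      by_cases his : i ∈ s
      · rw [s.piecewise_eq_of_mem x y his, hxy i ⟨his, hi⟩]
      · exact s.piecewise_eq_of_notMem x y his

section margProb

variable {ι α : Type*} [Fintype ι] [Fintype α] [DecidableEq ι] [DecidableEq α]
  {w : (ι → α) → ℝ}

theorem dependsOn_margProb (w : (ι → α) → ℝ) (A : Finset ι) : DependsOn (margProb w A) ↑A :=
  fun _ _ hxy ↦ sum_congr rfl fun _ _ ↦ if_congr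
    ⟨fun h i hi ↦ (h i hi).trans (hxy i hi), fun h i hi ↦ (h i hi).trans (hxy i hi).symm⟩ rfl rfl

theorem margProb_pos (hpos : ∀ u, 0 < w u) (A : Finset ι) (v : ι → α) : 0 < margProb w A v :=
  sum_pos' (fun u _ ↦ by split_ifs <;> simp [(hpos u).le])
    ⟨v, mem_univ v, by simp [hpos v]⟩

theorem sum_filter_margProb_union {A E : Finset ι} (hAE : Disjoint A E) (v : ι → α) :
    ∑ x ∈ univ.filter (fun x ↦ ∀ i ∉ E, x i = v i), margProb w (A ∪ E) x = margProb w A v := by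
  -- each `u` agreeing with `v` on `A` is counted once, for `x = E.piecewise u v`
  have key : ∀ u x : ι → α, ((∀ i ∉ E, x i = v i) ∧ ∀ i ∈ A ∪ E, u i = x i) ↔
      x = E.piecewise u v ∧ ∀ i ∈ A, u i = v i := by
    intro u x
    constructor
    · rintro ⟨hxv, hux⟩
      refine ⟨funext fun i ↦ ?_, fun i hi ↦ ?_⟩
      · by_cases hi : i ∈ E
        · simp [hi, hux i (mem_union_right A hi)]
        · simp [hi, hxv i hi]
      · exact (hux i (mem_union_left E hi)).trans (hxv i (disjoint_left.mp hAE hi))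
    · rintro ⟨rfl, huv⟩
      refine ⟨fun i hi ↦ by simp [hi], fun i hi ↦ ?_⟩
      by_cases hiE : i ∈ E
      · simp [hiE]
      · simp [hiE, huv i ((mem_union.mp hi).resolve_right hiE)]
  simp only [margProb]
  rw [sum_comm]
  refine sum_congr rfl fun u _ ↦ ?_
  simp_rw [sum_filter, ← ite_and, key, ite_and, sum_ite_eq', mem_univ, if_true]

theorem CondIndepSets.dependsOn_div {A B C : Finset ι} (h : CondIndepSets w A B C)
    (hpos : ∀ u, 0 < w u) (hAB : Disjoint A B) (hBC : Disjoint B C) :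
    DependsOn (fun x ↦ margProb w (A ∪ B ∪ C) x / margProb w (B ∪ C) x) (↑B)ᶜ := by
  have hdiv : ∀ x, margProb w (A ∪ B ∪ C) x / margProb w (B ∪ C) x
      = margProb w (A ∪ C) x / margProb w C x := fun x ↦
    (div_eq_div_iff (margProb_pos hpos _ x).ne' (margProb_pos hpos _ x).ne').mpr (h x)
  have hAC : (↑(A ∪ C) : Set ι) ⊆ (↑B)ᶜ := by
    simpa [Set.subset_compl_iff_disjoint_right] using ⟨hAB, hBC.symm⟩
  intro x y hxy
  simp only [hdiv, (dependsOn_margProb w _).mono hAC hxy,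
    (dependsOn_margProb w C).mono ((coe_subset.mpr subset_union_right).trans hAC) hxy]

theorem margProb_eq_div_mul_of_dependsOn {A B E : Finset ι} (hAE : Disjoint A E)
    (hBE : Disjoint B E) (hB : ∀ x, margProb w (B ∪ E) x ≠ 0)
    (hdep : DependsOn (fun x ↦ margProb w (A ∪ E) x / margProb w (B ∪ E) x) (↑E)ᶜ)
    (v : ι → α) :
    margProb w A v = margProb w (A ∪ E) v / margProb w (B ∪ E) v * margProb w B v := by
  rw [← sum_filter_margProb_union hAE, ← sum_filter_margProb_union hBE, mul_sum]
  refine sum_congr rfl fun x hx ↦ ?_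
  have hxv : margProb w (A ∪ E) x / margProb w (B ∪ E) x
      = margProb w (A ∪ E) v / margProb w (B ∪ E) v := hdep (mem_filter.mp hx).2
  rw [← hxv, div_mul_cancel₀ _ (hB x)]

end margProb

theorem intersection_of_strictly_positive_general
    {ι α : Type*} [Fintype ι] [Fintype α] [DecidableEq ι] [DecidableEq α]
    (w : (ι → α) → ℝ) (hpos : ∀ u, 0 < w u)
    (S T U R : Finset ι)
    (hST : Disjoint S T) (hSU : Disjoint S U)
    (hTU : Disjoint T U) (hTR : Disjoint T R) (hUR : Disjoint U R)
    (h1 : CondIndepSets w S T (R ∪ U)) (h2 : CondIndepSets w S U (R ∪ T)) :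
    CondIndepSets w S (T ∪ U) R := by
  intro v
  have hR : Disjoint R (T ∪ U) := disjoint_union_right.mpr ⟨hTR.symm, hUR.symm⟩
  have hdepT := h1.dependsOn_div hpos hST (disjoint_union_right.mpr ⟨hTR, hTU⟩)
  have hdepU := h2.dependsOn_div hpos hSU (disjoint_union_right.mpr ⟨hUR, hTU.symm⟩)
  rw [show S ∪ T ∪ (R ∪ U) = S ∪ R ∪ (T ∪ U) by ac_rfl,
    show T ∪ (R ∪ U) = R ∪ (T ∪ U) by ac_rfl] at hdepT
  rw [show S ∪ U ∪ (R ∪ T) = S ∪ R ∪ (T ∪ U) by ac_rfl,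
    show U ∪ (R ∪ T) = R ∪ (T ∪ U) by ac_rfl] at hdepU
  have hdepTU := hdepT.inter hdepU
  rw [← Set.compl_union, ← coe_union] at hdepTU
  have hSR := margProb_eq_div_mul_of_dependsOn
    (disjoint_union_left.mpr ⟨disjoint_union_right.mpr ⟨hST, hSU⟩, hR⟩) hR
    (fun x ↦ (margProb_pos hpos _ x).ne') hdepTU v
  rw [show S ∪ (T ∪ U) ∪ R = S ∪ R ∪ (T ∪ U) by ac_rfl,
    show T ∪ U ∪ R = R ∪ (T ∪ U) by ac_rfl, hSR, div_mul_eq_mul_div,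
    div_mul_cancel₀ _ (margProb_pos hpos _ v).ne']

/-- Intersection property for strictly positive discrete distributions:
if the joint pmf `w` is strictly positive, then for disjoint sets of variables
`S ⫫ T | (R ∪ U)` and `S ⫫ U | (R ∪ T)` together imply `S ⫫ (T ∪ U) | R`. -/
theorem intersection_of_strictly_positive
    {ι α : Type*} [Fintype ι] [Fintype α] [DecidableEq ι] [DecidableEq α]
    (w : (ι → α) → ℝ) (hpos : ∀ u, 0 < w u) (hsum : ∑ u : ι → α, w u = 1)
    (S T U R : Finset ι)
    (hST : Disjoint S T) (hSU : Disjoint S U) (hSR : Disjoint S R)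
    (hTU : Disjoint T U) (hTR : Disjoint T R) (hUR : Disjoint U R)
    (h1 : CondIndepSets w S T (R ∪ U)) (h2 : CondIndepSets w S U (R ∪ T)) :
    CondIndepSets w S (T ∪ U) R :=
  intersection_of_strictly_positive_general w hpos S T U R hST hSU hTU hTR hUR h1 h2
end
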